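/- Necessity of $2f$-redundancy (abstract deadlock version): let $n, f$ be positive integers with $n \ge 2f + 1$, and let $\{\mathscr{X}_i\}_{i \in \mathscr{H}}$ be nonempty closed convex sets in $\mathbb{R}^m$ indexed by a set $\mathscr{H}$ with $|\mathscr{H}| = n - f$. Suppose there exists a subset $\mathscr{T} \subseteq \mathscr{H}$ with $|\mathscr{T}| = n - 2f$ and a point $x \in \bigcap_{i \in \mathscr{T}} \mathscr{X}_i$ with $x \notin \bigcap_{i \in \mathscr{H}} \mathscr{X}_i$. Consider the dynamics where each agent $i \in \mathscr{T}$ starts at $x_i(0) = x$, $f$ Byzantine agents always send $x$, and each agent in $\mathscr{T}$ retains the $n - f - 1$ closest received values (filtering the furthest $f$) and updates via $x_i(t+1) = \mathrm{P}_{\mathscr{X}_i}[x_i(t) + \alpha \sum_{j \in \mathscr{M}_i(t)} (x_{ji}(t) - x_i(t))]$. Then $x_i(t) = x$ for all $i \in \mathscr{T}$ and all $t \ge 0$, so the agents in $\mathscr{T}$ remain forever at the point $x \notin \bigcap_{i \in \mathscr{H}} \mathscr{X}_i$. -/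

import Mathlib

/-!
By induction on `t`. If every agent of `T` is at `x`, then agent `i ∈ T` receives `x` from the
`|T| - 1` other agents of `T` and from the `f` Byzantine agents, i.e. from `n - f - 1` senders,
exactly as many as it retains. Values at distance `0` from its own state cannot be beaten in the
filtering, so every retained value is `x`, the consensus term vanishes, and projecting
`x ∈ Xᵢ` onto `Xᵢ` returns `x`.
-/

open Finset

theorem eq_of_forall_dist_le_of_mem {α : Type*} [MetricSpace α] {S : Set α} {y p : α}
    (hy : y ∈ S) (hp : ∀ z ∈ S, dist y p ≤ dist y z) : p = y := by
  have h := hp y hy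
  rw [dist_self] at h
  exact (dist_le_zero.mp h).symm

theorem eq_of_mem_of_forall_norm_sub_le {ι E : Type*} [DecidableEq ι] [NormedAddGroup E]
    {A M Z : Finset ι} {g : ι → E} {v : E}
    (hZA : Z ⊆ A) (hcard : M.card ≤ Z.card) (hZ : ∀ l ∈ Z, g l = v)
    (hclosest : ∀ j ∈ M, ∀ l ∈ A \ M, ‖v - g j‖ ≤ ‖v - g l‖) :
    ∀ j ∈ M, g j = v := by
  intro j hj
  by_cases hjZ : j ∈ Z
  · exact hZ j hjZ
  obtain ⟨l, hlZ, hlM⟩ : ∃ l ∈ Z, l ∉ M := by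
    by_contra! hZM
    exact hjZ (eq_of_subset_of_card_le hZM hcard ▸ hj)
  have hle := hclosest j hj l (mem_sdiff.mpr ⟨hZA hlZ, hlM⟩)
  rw [hZ l hlZ, sub_self, norm_zero, norm_le_zero_iff, sub_eq_zero] at hle
  exact hle.symm

section

variable {ι : Type*} [DecidableEq ι] {T H N : Finset ι} {i : ι}

theorem erase_union_sdiff_subset_erase (hTH : T ⊆ H) (hHN : H ⊆ N) (hi : i ∈ T) :
    T.erase i ∪ (N \ H) ⊆ N.erase i :=
  union_subset (erase_subset_erase i (hTH.trans hHN))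
    (subset_erase.mpr ⟨sdiff_subset, fun hiN => (mem_sdiff.mp hiN).2 (hTH hi)⟩)

theorem card_erase_union_sdiff (hTH : T ⊆ H) (hHN : H ⊆ N) (hi : i ∈ T) :
    (T.erase i ∪ (N \ H)).card = T.card - 1 + (N.card - H.card) := by
  have hdisj : Disjoint (T.erase i) (N \ H) :=
    disjoint_left.mpr fun _ ha haN => (mem_sdiff.mp haN).2 (hTH (mem_of_mem_erase ha))
  rw [card_union_of_disjoint hdisj, card_erase_of_mem hi, card_sdiff_of_subset hHN]

end

theorem necessity_of_2f_redundancy_general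
    {m : ℕ} {ι : Type*} [DecidableEq ι]
    (n f : ℕ)
    (N H : Finset ι) (hHN : H ⊆ N) (hN : N.card = n) (hH : H.card = n - f)
    (X : ι → Set (EuclideanSpace ℝ (Fin m)))
    (T : Finset ι) (hTH : T ⊆ H) (hT : T.card = n - 2 * f)
    (x : EuclideanSpace ℝ (Fin m))
    (hxT : ∀ i ∈ T, x ∈ X i)
    -- Euclidean projections onto the constraint sets
    (P : ι → EuclideanSpace ℝ (Fin m) → EuclideanSpace ℝ (Fin m))
    (hP : ∀ i ∈ H, ∀ y, P i y ∈ X i ∧ ∀ z ∈ X i, dist y (P i y) ≤ dist y z)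
    -- states of the normal agents
    (xs : ℕ → ι → EuclideanSpace ℝ (Fin m))
    -- received values: `r t j i` is the value agent `i` receives from `j`
    (r : ℕ → ι → ι → EuclideanSpace ℝ (Fin m))
    -- normal agents send their true states
    (hnormal : ∀ t, ∀ j ∈ H, ∀ i, r t j i = xs t j)
    -- Byzantine agents always send `x`
    (hbyz : ∀ t, ∀ j ∈ N \ H, ∀ i ∈ H, r t j i = x)
    -- retained sets: the `n - f - 1` received values closest to the agent's own
    (M : ℕ → ι → Finset ι)
    (hMcard : ∀ t, ∀ i ∈ H, (M t i).card = n - f - 1)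
    (hMfilter : ∀ t, ∀ i ∈ H, ∀ j ∈ M t i, ∀ l ∈ N.erase i \ M t i,
      ‖xs t i - r t j i‖ ≤ ‖xs t i - r t l i‖)
    -- projected consensus update
    (α : ℝ)
    (hupdate : ∀ t, ∀ i ∈ H,
      xs (t + 1) i = P i (xs t i + α • ∑ j ∈ M t i, (r t j i - xs t i)))
    -- initial condition
    (hinit : ∀ i ∈ T, xs 0 i = x) :
    ∀ t, ∀ i ∈ T, xs t i = x := by
  intro t
  induction t with
  | zero => exact hinit
  | succ t ih =>
    intro i hi
    have hiH := hTH hi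
    have hxi := ih i hi
    have hsent : ∀ l ∈ T.erase i ∪ (N \ H), r t l i = x := by
      intro l hl
      rcases mem_union.mp hl with hlT | hlByz
      · have hlT := mem_of_mem_erase hlT
        rw [hnormal t l (hTH hlT) i, ih l hlT]
      · exact hbyz t l hlByz i hiH
    have hcard : (M t i).card ≤ (T.erase i ∪ (N \ H)).card := by
      have hTpos : 0 < T.card := card_pos.mpr ⟨i, hi⟩
      rw [card_erase_union_sdiff hTH hHN hi, hMcard t i hiH, hN, hH]
      omega
    have hretained : ∀ j ∈ M t i, r t j i = x :=
      eq_of_mem_of_forall_norm_sub_le (erase_union_sdiff_subset_erase hTH hHN hi) hcard hsent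
        (hxi ▸ hMfilter t i hiH)
    have hsum : ∑ j ∈ M t i, (r t j i - xs t i) = 0 :=
      sum_eq_zero fun j hj => by rw [hretained j hj, hxi, sub_self]
    rw [hupdate t i hiH, hsum, smul_zero, add_zero, hxi]
    exact eq_of_forall_dist_le_of_mem (hxT i hi) (hP i hiH x).2

/-- Necessity of `2f`-redundancy (abstract deadlock version): if a subset `T`
of normal agents of size `n - 2f` starts at a common point `x` lying in all
their constraint sets but outside `⋂_{i ∈ H} Xᵢ`, the Byzantine agents always
send `x`, and every normal agent retains the `n - f - 1` closest received
values (discarding the furthest `f`) and updates by a projected consensus step,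
then every agent of `T` stays at `x` forever. -/
theorem necessity_of_2f_redundancy
    {m : ℕ} {ι : Type*} [DecidableEq ι]
    (n f : ℕ) (hf : 0 < f) (hn : 2 * f + 1 ≤ n)
    (N H : Finset ι) (hHN : H ⊆ N) (hN : N.card = n) (hH : H.card = n - f)
    (X : ι → Set (EuclideanSpace ℝ (Fin m)))
    (hne : ∀ i ∈ H, (X i).Nonempty)
    (hcl : ∀ i ∈ H, IsClosed (X i)) (hconv : ∀ i ∈ H, Convex ℝ (X i))
    (T : Finset ι) (hTH : T ⊆ H) (hT : T.card = n - 2 * f)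
    (x : EuclideanSpace ℝ (Fin m))
    (hxT : ∀ i ∈ T, x ∈ X i) (hxH : x ∉ ⋂ i ∈ H, X i)
    -- Euclidean projections onto the constraint sets
    (P : ι → EuclideanSpace ℝ (Fin m) → EuclideanSpace ℝ (Fin m))
    (hP : ∀ i ∈ H, ∀ y, P i y ∈ X i ∧ ∀ z ∈ X i, dist y (P i y) ≤ dist y z)
    -- states of the normal agents
    (xs : ℕ → ι → EuclideanSpace ℝ (Fin m))
    -- received values: `r t j i` is the value agent `i` receives from `j`
    (r : ℕ → ι → ι → EuclideanSpace ℝ (Fin m))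
    -- normal agents send their true states
    (hnormal : ∀ t, ∀ j ∈ H, ∀ i, r t j i = xs t j)
    -- Byzantine agents always send `x`
    (hbyz : ∀ t, ∀ j ∈ N \ H, ∀ i ∈ H, r t j i = x)
    -- retained sets: the `n - f - 1` received values closest to the agent's own
    (M : ℕ → ι → Finset ι)
    (hMsub : ∀ t, ∀ i ∈ H, M t i ⊆ N.erase i)
    (hMcard : ∀ t, ∀ i ∈ H, (M t i).card = n - f - 1)
    (hMfilter : ∀ t, ∀ i ∈ H, ∀ j ∈ M t i, ∀ l ∈ N.erase i \ M t i,
      ‖xs t i - r t j i‖ ≤ ‖xs t i - r t l i‖)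
    -- projected consensus update
    (α : ℝ)
    (hupdate : ∀ t, ∀ i ∈ H,
      xs (t + 1) i = P i (xs t i + α • ∑ j ∈ M t i, (r t j i - xs t i)))
    -- initial condition
    (hinit : ∀ i ∈ T, xs 0 i = x) :
    ∀ t, ∀ i ∈ T, xs t i = x :=
  necessity_of_2f_redundancy_general n f N H hHN hN hH X T hTH hT x hxT P hP xs r hnormal hbyz M
    hMcard hMfilter α hupdate hinit
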